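/- arXiv:2009.01201 — 2 statements merged into one kernel-verified Lean document; each statement's English description precedes it below -/
import Mathlib

section
/- The vector v_P satisfies (rec f*)(-v_P) + (rec g*)(v_P) = -‖v_P‖², where rec f* and rec g* are the recession functions of the Fenchel conjugates f* and g*. -/
/-
By a separation argument a proper lsc convex `f` has an affine minorant, so `f*` is finite
somewhere; then `rec f*` is the support function `σ_{dom f}`: the increments of `f*` along `y`
are at most `σ_{dom f}(y)`, and conversely `f*(u₀ + n y) ≥ ⟪x, u₀⟫ + n ⟪x, y⟫ - f x` for
`x ∈ dom f` forces `⟪x, y⟫ ≤ rec f*(y)`. Hence the left side is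
`σ_{dom f}(-v) + σ_{dom g}(v) = σ_{dom f - dom g}(-v) = σ_{cl(dom f - dom g)}(-v)`,
and the variational inequality of the projection `v = P_C 0` gives `σ_C(-v) = -‖v‖²`.
-/

open scoped InnerProductSpace Pointwise Classical
open Filter Topology

noncomputable section

variable {H : Type*} [NormedAddCommGroup H] [InnerProductSpace ℝ H]

/-- The effective domain of an extended-real-valued function. -/
def fdom {α : Type*} (f : α → EReal) : Set α := {x | f x ≠ ⊤}

/-- The Fenchel conjugate `f*(u) = sup_x (⟪x, u⟫ - f x)`. -/
def fconj (f : H → EReal) : H → EReal :=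
  fun u => ⨆ x : H, ((⟪x, u⟫_ℝ : ℝ) : EReal) - f x

/-- The recession function `(rec f)(y) = sup_{x ∈ dom f} (f (x + y) - f x)`. -/
def recFn (f : H → EReal) : H → EReal :=
  fun y => ⨆ x ∈ fdom f, (f (x + y) - f x)

/-- A proper function: never `-∞` and not identically `+∞`. -/
def ProperFn {α : Type*} (f : α → EReal) : Prop := (∀ x, f x ≠ ⊥) ∧ ∃ x, f x ≠ ⊤

/-- Convexity of an extended-real-valued function, via convexity of its epigraph. -/
def ConvexFn (f : H → EReal) : Prop :=
  Convex ℝ {p : H × ℝ | f p.1 ≤ (p.2 : EReal)}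

/-- `v` is the element of minimum norm of `S`, i.e. `v = P_S 0`, the metric
projection of `0` onto `S`. -/
def IsMinNormPoint (S : Set H) (v : H) : Prop := v ∈ S ∧ ∀ w ∈ S, ‖v‖ ≤ ‖w‖

/-- `p` is the metric projection of `x` onto `S`, i.e. `p = P_S x`. -/
def IsProjOn (S : Set H) (x p : H) : Prop := p ∈ S ∧ ∀ w ∈ S, dist x p ≤ dist x w

/-- The polar cone `S° = {u | ∀ x ∈ S, ⟪x, u⟫ ≤ 0}`. -/
def polarCone (s : Set H) : Set H := {u | ∀ x ∈ s, ⟪x, u⟫_ℝ ≤ 0}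

/-- The recession cone `rec S = {x | ∀ y ∈ S, x + y ∈ S}`. -/
def recCone (s : Set H) : Set H := {x | ∀ y ∈ s, x + y ∈ s}

/-- `p = prox_f w`: `p` minimizes `y ↦ f y + ½‖y - w‖²`. -/
def IsProxOf (f : H → EReal) (w p : H) : Prop :=
  ∀ y : H, f p + ((1 / 2 * ‖p - w‖ ^ 2 : ℝ) : EReal) ≤ f y + ((1 / 2 * ‖y - w‖ ^ 2 : ℝ) : EReal)

def supportFn (s : Set H) (y : H) : EReal := ⨆ x ∈ s, ((⟪x, y⟫_ℝ : ℝ) : EReal)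

section SupportFunction

variable {s t : Set H}

lemma coe_inner_le_supportFn {x : H} (hx : x ∈ s) (y : H) :
    ((⟪x, y⟫_ℝ : ℝ) : EReal) ≤ supportFn s y :=
  le_biSup (fun x => ((⟪x, y⟫_ℝ : ℝ) : EReal)) hx

lemma supportFn_sub (y : H) : supportFn (s - t) y = supportFn s y + supportFn t (-y) := by
  refine le_antisymm (iSup₂_le ?_) (EReal.add_le_of_forall_lt fun a ha b hb => ?_)
  · rintro _ ⟨x, hx, z, hz, rfl⟩
    rw [inner_sub_left, sub_eq_add_neg, ← inner_neg_right, EReal.coe_add]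
    exact add_le_add (coe_inner_le_supportFn hx y) (coe_inner_le_supportFn hz (-y))
  · obtain ⟨x, hx, hax⟩ := lt_biSup_iff.1 ha
    obtain ⟨z, hz, hbz⟩ := lt_biSup_iff.1 hb
    calc a + b ≤ ((⟪x, y⟫_ℝ : ℝ) : EReal) + ((⟪z, -y⟫_ℝ : ℝ) : EReal) :=
          add_le_add hax.le hbz.le
      _ = ((⟪x - z, y⟫_ℝ : ℝ) : EReal) := by
          rw [← EReal.coe_add, inner_sub_left, inner_neg_right, sub_eq_add_neg]
      _ ≤ supportFn (s - t) y := coe_inner_le_supportFn (Set.sub_mem_sub hx hz) y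

lemma supportFn_closure (y : H) : supportFn (closure s) y = supportFn s y := by
  refine le_antisymm (iSup₂_le fun x hx => ?_) (biSup_mono fun _ hx => subset_closure hx)
  have hclosed : IsClosed {x : H | ((⟪x, y⟫_ℝ : ℝ) : EReal) ≤ supportFn s y} :=
    isClosed_le (continuous_coe_real_ereal.comp (continuous_id.inner continuous_const))
      continuous_const
  exact closure_minimal (fun x hx => coe_inner_le_supportFn hx y) hclosed hx

end SupportFunction

lemma IsMinNormPoint.norm_sq_le_inner {K : Set H} {v : H} (hK : Convex ℝ K)
    (hv : IsMinNormPoint K v) {w : H} (hw : w ∈ K) : ‖v‖ ^ 2 ≤ ⟪w, v⟫_ℝ := by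
  have : Nonempty K := ⟨⟨v, hv.1⟩⟩
  have hinf : ‖0 - v‖ = ⨅ w : K, ‖0 - (w : H)‖ :=
    le_antisymm (le_ciInf fun w => by simpa using hv.2 w w.2)
      (ciInf_le ⟨0, by rintro _ ⟨w, rfl⟩; positivity⟩ (⟨v, hv.1⟩ : K))
  have h := (norm_eq_iInf_iff_real_inner_le_zero hK hv.1).1 hinf w hw
  rw [zero_sub, inner_neg_left, inner_sub_right, real_inner_self_eq_norm_sq,
    real_inner_comm] at h
  linarith

lemma supportFn_neg_of_isMinNormPoint {K : Set H} {v : H} (hK : Convex ℝ K)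
    (hv : IsMinNormPoint K v) : supportFn K (-v) = ((-‖v‖ ^ 2 : ℝ) : EReal) := by
  refine le_antisymm (iSup₂_le fun w hw => ?_) ?_
  · rw [inner_neg_right, EReal.coe_le_coe_iff, neg_le_neg_iff]
    exact hv.norm_sq_le_inner hK hw
  · convert coe_inner_le_supportFn hv.1 (-v) using 2
    rw [inner_neg_right, real_inner_self_eq_norm_sq]

lemma le_of_forall_nat_add_mul_le {a b c d : ℝ} (h : ∀ n : ℕ, a + n * b ≤ c + n * d) :
    b ≤ d := by
  by_contra! hdb
  obtain ⟨n, hn⟩ := exists_nat_gt ((c - a) / (b - d))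
  rw [div_lt_iff₀ (sub_pos.2 hdb)] at hn
  linarith [h n]

lemma LowerSemicontinuous.isClosed_realEpigraph {α : Type*} [TopologicalSpace α]
    {f : α → EReal} (hf : LowerSemicontinuous f) :
    IsClosed {p : α × ℝ | f p.1 ≤ (p.2 : EReal)} :=
  hf.isClosed_epigraph.preimage
    (continuous_fst.prodMk (continuous_coe_real_ereal.comp continuous_snd))

lemma ProperFn.exists_eq_coe {α : Type*} {f : α → EReal} (hp : ProperFn f) {x : α}
    (hx : x ∈ fdom f) : ∃ r : ℝ, f x = r :=
  ⟨(f x).toReal, (EReal.coe_toReal hx (hp.1 x)).symm⟩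

section Epigraph

variable {f : H → EReal}

lemma ConvexFn.convex_fdom (hf : ConvexFn f) : Convex ℝ (fdom f) := by
  have himage : fdom f = LinearMap.fst ℝ H ℝ '' {p : H × ℝ | f p.1 ≤ (p.2 : EReal)} := by
    ext x
    exact ⟨fun hx => ⟨(x, (f x).toReal), EReal.le_coe_toReal hx, rfl⟩,
      fun ⟨p, hp, hpx⟩ => hpx ▸ ne_top_of_le_ne_top (EReal.coe_ne_top _) hp⟩
  exact himage ▸ hf.linear_image _

/- Separate a point strictly below the epigraph by `ℓ`; as `ℓ (x, r) = ⟪w, x⟫ + r b` with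
`b > 0`, the level `ℓ = c` is the graph of an affine minorant. -/
lemma exists_affine_minorant [CompleteSpace H] (hp : ProperFn f) (hlsc : LowerSemicontinuous f)
    (hcvx : ConvexFn f) : ∃ (w : H) (c : ℝ), ∀ x, ((⟪x, w⟫_ℝ + c : ℝ) : EReal) ≤ f x := by
  obtain ⟨x₀, hx₀⟩ := hp.2
  obtain ⟨t, ht⟩ := hp.exists_eq_coe hx₀
  obtain ⟨ℓ, c, hℓ₀, hℓ⟩ := geometric_hahn_banach_point_closed hcvx hlsc.isClosed_realEpigraph
    (x := (x₀, t - 1)) (by simp only [Set.mem_ofPred_eq, ht, not_le]; exact_mod_cast sub_one_lt t)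
  set w := (InnerProductSpace.toDual ℝ H).symm (ℓ.comp (.inl ℝ H ℝ))
  set b := ℓ (0, 1)
  have hℓ_apply (x : H) (r : ℝ) : ℓ (x, r) = ⟪x, w⟫_ℝ + r * b := by
    have hxr : ((x, r) : H × ℝ) = (x, 0) + r • ((0 : H), (1 : ℝ)) := Prod.ext (by simp) (by simp)
    rw [hxr, map_add, map_smul, smul_eq_mul, real_inner_comm,
      InnerProductSpace.toDual_symm_apply]
    rfl
  have hb : 0 < b := by
    have := hℓ (x₀, t) (by simp [ht])
    rw [hℓ_apply] at this hℓ₀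
    linarith
  refine ⟨-b⁻¹ • w, c / b, fun x => ?_⟩
  by_cases hx : f x = ⊤
  · exact hx ▸ le_top
  obtain ⟨s, hs⟩ := hp.exists_eq_coe hx
  have := hℓ (x, s) (by simp [hs])
  rw [hℓ_apply] at this
  rw [hs, EReal.coe_le_coe_iff, real_inner_smul_right, neg_mul, ← div_eq_inv_mul,
    ← sub_eq_neg_add, ← sub_div, div_le_iff₀ hb]
  linarith

lemma exists_fconj_ne_top [CompleteSpace H] (hp : ProperFn f) (hlsc : LowerSemicontinuous f)
    (hcvx : ConvexFn f) : ∃ u, fconj f u ≠ ⊤ := by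
  obtain ⟨w, c, hwc⟩ := exists_affine_minorant hp hlsc hcvx
  refine ⟨w, ne_top_of_le_ne_top (EReal.coe_ne_top (-c)) (iSup_le fun x => ?_)⟩
  by_cases hx : f x = ⊤
  · simp [hx]
  obtain ⟨s, hs⟩ := hp.exists_eq_coe hx
  have := hwc x
  rw [hs, EReal.coe_le_coe_iff] at this
  rw [hs, ← EReal.coe_sub, EReal.coe_le_coe_iff]
  linarith

end Epigraph

section Conjugate

variable {f : H → EReal}

lemma coe_inner_sub_le_fconj (f : H → EReal) (x u : H) :
    ((⟪x, u⟫_ℝ : ℝ) : EReal) - f x ≤ fconj f u :=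
  le_iSup (fun x => ((⟪x, u⟫_ℝ : ℝ) : EReal) - f x) x

lemma fconj_ne_bot (hp : ProperFn f) (u : H) : fconj f u ≠ ⊥ := by
  obtain ⟨x, hx⟩ := hp.2
  obtain ⟨s, hs⟩ := hp.exists_eq_coe hx
  refine ne_bot_of_le_ne_bot ?_ (coe_inner_sub_le_fconj f x u)
  rw [hs, ← EReal.coe_sub]
  exact EReal.coe_ne_bot _

lemma fconj_add_le_add_supportFn (f : H → EReal) (u y : H) :
    fconj f (u + y) ≤ fconj f u + supportFn (fdom f) y := by
  refine iSup_le fun x => ?_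
  by_cases hx : f x = ⊤
  · simp [hx]
  calc ((⟪x, u + y⟫_ℝ : ℝ) : EReal) - f x = (((⟪x, u⟫_ℝ : ℝ) : EReal) - f x) + ⟪x, y⟫_ℝ := by
        rw [inner_add_right, EReal.coe_add, sub_eq_add_neg, sub_eq_add_neg, add_right_comm]
    _ ≤ fconj f u + supportFn (fdom f) y :=
        add_le_add (coe_inner_sub_le_fconj f x u) (coe_inner_le_supportFn hx y)

lemma recFn_fconj_le_supportFn (hp : ProperFn f) (y : H) :
    recFn (fconj f) y ≤ supportFn (fdom f) y := by
  refine iSup₂_le fun u hu => ?_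
  rw [EReal.sub_le_iff_le_add (.inl (fconj_ne_bot hp u)) (.inl hu)]
  exact (fconj_add_le_add_supportFn f u y).trans_eq (add_comm _ _)

lemma le_coe_add_mul_of_recFn_le (F : H → EReal) {u y : H} {c r : ℝ} (hu : F u ≤ c)
    (hr : recFn F y ≤ r) (n : ℕ) : F (u + (n : ℝ) • y) ≤ ((c + n * r : ℝ) : EReal) := by
  induction n with
  | zero => simpa using hu
  | succ n ih =>
    have hdom : u + (n : ℝ) • y ∈ fdom F := ne_top_of_le_ne_top (EReal.coe_ne_top _) ih
    have hstep : F (u + (n : ℝ) • y + y) - F (u + (n : ℝ) • y) ≤ r :=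
      (le_biSup (fun x => F (x + y) - F x) hdom).trans hr
    rw [EReal.sub_le_iff_le_add (.inr (EReal.coe_ne_top r)) (.inl hdom)] at hstep
    calc F (u + ((n + 1 : ℕ) : ℝ) • y) = F (u + (n : ℝ) • y + y) := by
          rw [Nat.cast_succ, add_smul, one_smul, add_assoc]
      _ ≤ r + ((c + n * r : ℝ) : EReal) := hstep.trans (add_le_add le_rfl ih)
      _ = ((c + (n + 1 : ℕ) * r : ℝ) : EReal) := by
          rw [← EReal.coe_add, EReal.coe_eq_coe_iff]
          push_cast
          ring

lemma coe_inner_le_recFn_fconj (hp : ProperFn f) (hfin : ∃ u, fconj f u ≠ ⊤) {x : H}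
    (hx : x ∈ fdom f) (y : H) : ((⟪x, y⟫_ℝ : ℝ) : EReal) ≤ recFn (fconj f) y := by
  refine EReal.le_of_forall_lt_iff_le.1 fun r hr => ?_
  obtain ⟨u, hu⟩ := hfin
  obtain ⟨s, hs⟩ := hp.exists_eq_coe hx
  refine EReal.coe_le_coe_iff.2
    (le_of_forall_nat_add_mul_le (a := ⟪x, u⟫_ℝ - s) (c := (fconj f u).toReal) fun n => ?_)
  have := (coe_inner_sub_le_fconj f x (u + (n : ℝ) • y)).trans
    (le_coe_add_mul_of_recFn_le (fconj f) (EReal.le_coe_toReal hu) hr.le n)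
  rw [hs, ← EReal.coe_sub, EReal.coe_le_coe_iff, inner_add_right, real_inner_smul_right] at this
  linarith

lemma recFn_fconj_eq_supportFn (hp : ProperFn f) (hfin : ∃ u, fconj f u ≠ ⊤) :
    recFn (fconj f) = supportFn (fdom f) :=
  funext fun y => le_antisymm (recFn_fconj_le_supportFn hp y)
    (iSup₂_le fun _ hx => coe_inner_le_recFn_fconj hp hfin hx y)

end Conjugate

theorem douglasRachford_vP_recession_identity {H : Type*} [NormedAddCommGroup H] [InnerProductSpace ℝ H]
    [FiniteDimensional ℝ H]
    (f g : H → EReal)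
    (hf_prop : ProperFn f) (hf_lsc : LowerSemicontinuous f) (hf_cvx : ConvexFn f)
    (hg_prop : ProperFn g) (hg_lsc : LowerSemicontinuous g) (hg_cvx : ConvexFn g)
    (vP : H) (hvP : IsMinNormPoint (closure (fdom f - fdom g)) vP)
    : recFn (fconj f) (-vP) + recFn (fconj g) vP = ((-‖vP‖ ^ 2 : ℝ) : EReal) := by
  have hC : Convex ℝ (closure (fdom f - fdom g)) :=
    (hf_cvx.convex_fdom.sub hg_cvx.convex_fdom).closure
  have hsub := supportFn_sub (s := fdom f) (t := fdom g) (-vP)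
  rw [neg_neg] at hsub
  rw [recFn_fconj_eq_supportFn hf_prop (exists_fconj_ne_top hf_prop hf_lsc hf_cvx),
    recFn_fconj_eq_supportFn hg_prop (exists_fconj_ne_top hg_prop hg_lsc hg_cvx), ← hsub,
    ← supportFn_closure, supportFn_neg_of_isMinNormPoint hC hvP]

end
end

section
/- The vector -v_D belongs to (rec(cl dom f*))° ∩ (rec(cl dom g*))°, i.e., -v_D lies in the polar cone of the recession cone of cl(dom f*) and in the polar cone of the recession cone of cl(dom g*). -/
/-!
Each `f*` is a supremum of affine functions, so `dom f*` is convex and `C = cl(dom f* + dom g*)` is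
closed and convex. Its minimal-norm point `v` satisfies `⟪w - v, v⟫ ≥ 0` for all `w ∈ C`. A direction
`x` recessive for `cl(dom f*)` is recessive for `C`, so `v + x ∈ C` and hence `⟪x, v⟫ ≥ 0`.
-/

open scoped InnerProductSpace Pointwise Classical
open Filter Topology

noncomputable section

variable {H : Type*} [NormedAddCommGroup H] [InnerProductSpace ℝ H]

lemma polarCone_anti : Antitone (polarCone : Set H → Set H) :=
  fun _ _ hst _ hu x hx => hu x (hst hx)

lemma recCone_closure_subset_recCone_closure_add {E : Type*} [NormedAddCommGroup E]
    (A B : Set E) :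
    recCone (closure A) ⊆ recCone (closure (A + B)) := by
  intro x hx w hw
  have hAB : A + B ⊆ (x + ·) ⁻¹' closure (A + B) := by
    rintro _ ⟨a, ha, b, hb, rfl⟩
    have h := map_mem_closure (continuous_add_const b) (hx a (subset_closure ha))
      fun y hy => Set.add_mem_add hy hb
    simpa only [Set.mem_preimage, add_assoc] using h
  exact closure_minimal hAB (isClosed_closure.preimage (continuous_const_add x)) hw

lemma IsMinNormPoint.inner_sub_nonneg {S : Set H} {v : H} (hS : Convex ℝ S)
    (hv : IsMinNormPoint S v) {w : H} (hw : w ∈ S) : 0 ≤ ⟪w - v, v⟫_ℝ := by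
  have hinf : ‖(0 : H) - v‖ = ⨅ w : S, ‖(0 : H) - w‖ := by
    have : Nonempty S := ⟨⟨v, hv.1⟩⟩
    simp only [zero_sub, norm_neg]
    exact le_antisymm (le_ciInf fun w => hv.2 w w.2)
      (ciInf_le ⟨0, by rintro _ ⟨w, rfl⟩; positivity⟩ (⟨v, hv.1⟩ : S))
  have h := (norm_eq_iInf_iff_real_inner_le_zero hS hv.1).1 hinf w hw
  rw [zero_sub, inner_neg_left, real_inner_comm] at h
  linarith

lemma IsMinNormPoint.neg_mem_polarCone_recCone {S : Set H} {v : H} (hS : Convex ℝ S)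
    (hv : IsMinNormPoint S v) : -v ∈ polarCone (recCone S) := by
  intro x hx
  have h := hv.inner_sub_nonneg hS (hx v hv.1)
  rw [add_sub_cancel_right] at h
  rw [inner_neg_right]
  linarith

lemma mem_fdom_fconj_iff {f : H → EReal} {u : H} :
    u ∈ fdom (fconj f) ↔ ∃ c : ℝ, ∀ x, ((⟪x, u⟫_ℝ : ℝ) : EReal) - f x ≤ c := by
  simp only [fdom, fconj, Set.mem_ofPred_eq, ← iSup_le_iff]
  constructor
  · exact fun h => ⟨_, EReal.le_coe_toReal h⟩
  · rintro ⟨c, hc⟩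
    exact (hc.trans_lt (EReal.coe_lt_top c)).ne

lemma convex_fdom_fconj (f : H → EReal) : Convex ℝ (fdom (fconj f)) := by
  intro u hu v hv a b ha hb hab
  obtain ⟨cu, hcu⟩ := mem_fdom_fconj_iff.1 hu
  obtain ⟨cv, hcv⟩ := mem_fdom_fconj_iff.1 hv
  refine mem_fdom_fconj_iff.2 ⟨a * cu + b * cv, fun x => ?_⟩
  have hu' := hcu x
  have hv' := hcv x
  generalize f x = y at hu' hv' ⊢
  induction y using EReal.rec with
  | bot => simp at hu'
  | top => simp
  | coe r =>
    rw [← EReal.coe_sub, EReal.coe_le_coe_iff] at hu' hv' ⊢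
    rw [inner_add_right, inner_smul_right, inner_smul_right]
    have hr : r = a * r + b * r := by rw [← add_mul, hab, one_mul]
    nlinarith

theorem neg_vD_mem_polar_recCones_general {H : Type*} [NormedAddCommGroup H] [InnerProductSpace ℝ H]
    (f g : H → EReal)
    (vD : H) (hvD : IsMinNormPoint (closure (fdom (fconj f) + fdom (fconj g))) vD)
    : -vD ∈ polarCone (recCone (closure (fdom (fconj f)))) ∩
      polarCone (recCone (closure (fdom (fconj g)))) := by
  have hconv : Convex ℝ (closure (fdom (fconj f) + fdom (fconj g))) :=
    ((convex_fdom_fconj f).add (convex_fdom_fconj g)).closure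
  have hpolar := hvD.neg_mem_polarCone_recCone hconv
  refine ⟨polarCone_anti (recCone_closure_subset_recCone_closure_add _ _) hpolar,
    polarCone_anti ?_ hpolar⟩
  rw [add_comm (fdom (fconj f))]
  exact recCone_closure_subset_recCone_closure_add _ _

theorem neg_vD_mem_polar_recCones {H : Type*} [NormedAddCommGroup H] [InnerProductSpace ℝ H]
    [FiniteDimensional ℝ H]
    (f g : H → EReal)
    (hf_prop : ProperFn f) (hf_lsc : LowerSemicontinuous f) (hf_cvx : ConvexFn f)
    (hg_prop : ProperFn g) (hg_lsc : LowerSemicontinuous g) (hg_cvx : ConvexFn g)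
    (vD : H) (hvD : IsMinNormPoint (closure (fdom (fconj f) + fdom (fconj g))) vD)
    : -vD ∈ polarCone (recCone (closure (fdom (fconj f)))) ∩
      polarCone (recCone (closure (fdom (fconj g)))) :=
  neg_vD_mem_polar_recCones_general f g vD hvD

end
end
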